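/- Let X be a Cantor space, f : X → X a chain mixing continuous surjection, and {𝒲_k} a sequence of nontrivial finite partitions of X by nonempty clopen sets with mesh(𝒲_k) → 0. Then for each k the vertex shift Σ(f,𝒲_k) is a topologically mixing two-sided subshift of finite type homeomorphic to the Cantor set, and there exist homeomorphisms ψ_k : Σ(f,𝒲_k) → X such that ψ_k ∘ σ ∘ ψ_k⁻¹ converges uniformly to f. -/

import Mathlib

open Filter

variable {V : Type*}

/-- The vertex shift of a directed graph with edge relation `E`. -/
def vertexShift (E : V → V → Prop) : Set (ℤ → V) :=
  {t | ∀ i : ℤ, E (t i) (t (i + 1))}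

/-- The shift map on the vertex shift. -/
def shiftMap (E : V → V → Prop) : vertexShift E → vertexShift E :=
  fun t => ⟨fun i => t.1 (i + 1), fun i => t.2 (i + 1)⟩

/-- `f` is chain mixing. -/
def ChainMixing {X : Type*} [MetricSpace X] (f : X → X) : Prop :=
  ∀ δ : ℝ, 0 < δ → ∀ x y : X, ∃ N : ℕ, ∀ n ≥ N,
    ∃ c : ℕ → X, c 0 = x ∧ c n = y ∧ ∀ i < n, dist (f (c i)) (c (i + 1)) < δ


section CantorAux
open Set Metric

variable {Y : Type*} [MetricSpace Y] [CompactSpace Y] [TotallyDisconnectedSpace Y]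

lemma clopen_small (x : Y) {r : ℝ} (hr : 0 < r) : ∃ V : Set Y, IsClopen V ∧ x ∈ V ∧ V ⊆ ball x r := by
  obtain ⟨V, hV, hxV, hVb⟩ := (isTopologicalBasis_isClopen (X := Y)).exists_subset_of_mem_open
    (mem_ball_self hr) isOpen_ball
  exact ⟨V, hV, hxV, hVb⟩

/-- Partition of a nonempty clopen set into (possibly empty) clopen pieces of small diameter. -/
lemma partition_small {A : Set Y} (hA : IsClopen A) {ε : ℝ} (hε : 0 < ε) :
    ∃ (m : ℕ) (g : Fin m → Set Y), (∀ j, IsClopen (g j)) ∧ (∀ j, diam (g j) ≤ ε / 2) ∧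
      Pairwise (Function.onFun Disjoint g) ∧ (⋃ j, g j) = A := by
  have hr : 0 < ε / 4 := by linarith
  have hcov : A ⊆ ⋃ x : Y, (clopen_small x hr).choose := fun y _ =>
    mem_iUnion.2 ⟨y, (clopen_small y hr).choose_spec.2.1⟩
  obtain ⟨s, hs⟩ := (hA.1.isCompact).elim_finite_subcover
    (fun x : Y => (clopen_small x hr).choose)
    (fun x => (clopen_small x hr).choose_spec.1.2) hcov
  set l := s.toList with hl
  set m := l.length
  refine ⟨m, fun j => (A ∩ (clopen_small (l.get j) hr).choose) \
    ⋃ (i : Fin m) (_ : i < j), (clopen_small (l.get i) hr).choose, ?_, ?_, ?_, ?_⟩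
  · intro j
    refine (hA.inter (clopen_small (l.get j) hr).choose_spec.1).diff ?_
    refine isClopen_iUnion_of_finite fun i => ?_
    refine isClopen_iUnion_of_finite fun _ => (clopen_small (l.get i) hr).choose_spec.1
  · intro j
    have h1 : (A ∩ (clopen_small (l.get j) hr).choose) \
        (⋃ (i : Fin m) (_ : i < j), (clopen_small (l.get i) hr).choose)
        ⊆ ball (l.get j) (ε/4) := fun y hy =>
      (clopen_small (l.get j) hr).choose_spec.2.2 hy.1.2
    calc diam _ ≤ diam (ball (l.get j) (ε/4)) := diam_mono h1 isBounded_ball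
    _ ≤ 2 * (ε/4) := diam_ball hr.le
    _ = ε / 2 := by ring
  · intro i j hij
    rcases lt_or_gt_of_ne hij with h | h
    · refine Set.disjoint_left.2 fun y hyi hyj => ?_
      exact hyj.2 (mem_iUnion.2 ⟨i, mem_iUnion.2 ⟨h, hyi.1.2⟩⟩)
    · refine Set.disjoint_left.2 fun y hyi hyj => ?_
      exact hyi.2 (mem_iUnion.2 ⟨j, mem_iUnion.2 ⟨h, hyj.1.2⟩⟩)
  · apply Set.Subset.antisymm
    · exact iUnion_subset fun j => fun y hy => hy.1.1
    · intro y hy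
      have : ∃ i : Fin m, y ∈ (clopen_small (l.get i) hr).choose := by
        obtain ⟨x, hxs, hyx⟩ := mem_iUnion₂.1 (hs hy)
        obtain ⟨i, hi⟩ := List.mem_iff_get.1 ((Finset.mem_toList).2 hxs)
        exact ⟨i, by rw [hi]; exact hyx⟩
      classical
      set t : Finset (Fin m) := Finset.univ.filter
        (fun i => y ∈ (clopen_small (l.get i) hr).choose) with ht
      have htne : t.Nonempty := ⟨this.choose, by simp [ht, this.choose_spec]⟩
      refine mem_iUnion.2 ⟨t.min' htne, ⟨⟨hy, ?_⟩, ?_⟩⟩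
      · have := t.min'_mem htne
        simpa [ht] using this
      · intro hmem
        obtain ⟨i, hi⟩ := mem_iUnion.1 hmem
        obtain ⟨hlt, hyi⟩ := mem_iUnion.1 hi
        have : i ∈ t := by simp [ht, hyi]
        exact absurd (t.min'_le i this) (by exact not_le.2 hlt)

variable (Y) in
/-- Partition property: `g` is a partition of `A` into nonempty clopen sets of diameter `≤ ε`. -/
def IsCPart (A : Set Y) (ε : ℝ) {n : ℕ} (g : Fin n → Set Y) : Prop :=
  (∀ j, IsClopen (g j) ∧ (g j).Nonempty ∧ diam (g j) ≤ ε) ∧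
    Pairwise (Function.onFun Disjoint g) ∧ (⋃ j, g j) = A

lemma two_points [PerfectSpace Y] {A : Set Y} (hA : IsOpen A) (hne : A.Nonempty) :
    ∃ x y, x ∈ A ∧ y ∈ A ∧ x ≠ y := by
  obtain ⟨x, hx⟩ := hne
  have h1 : A ∩ {x}ᶜ ∈ nhdsWithin x {x}ᶜ :=
    Filter.inter_mem (mem_nhdsWithin_of_mem_nhds (hA.mem_nhds hx)) self_mem_nhdsWithin
  obtain ⟨y, hy⟩ := Filter.nonempty_of_mem h1
  exact ⟨y, x, hy.1, hx, hy.2⟩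

lemma split_two [PerfectSpace Y] {A : Set Y} (hA : IsClopen A) (hne : A.Nonempty) :
    ∃ B C : Set Y, IsClopen B ∧ IsClopen C ∧ B.Nonempty ∧ C.Nonempty ∧
      Disjoint B C ∧ B ∪ C = A := by
  obtain ⟨x, y, hx, hy, hxy⟩ := two_points hA.2 hne
  obtain ⟨V, hV, hxV, hVy⟩ := (isTopologicalBasis_isClopen (X := Y)).exists_subset_of_mem_open
    (show x ∈ ({y}ᶜ : Set Y) from hxy) (isOpen_compl_singleton)
  refine ⟨A ∩ V, A \ V, hA.inter hV, hA.diff hV, ⟨x, hx, hxV⟩, ⟨y, hy, fun hyV => hVy hyV rfl⟩,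
    ?_, ?_⟩
  · exact Set.disjoint_left.2 fun z hz hz' => hz'.2 hz.2
  · rw [Set.inter_union_diff]

lemma cpart_grow [PerfectSpace Y] {A : Set Y} {ε : ℝ} {m : ℕ} {g : Fin (m + 1) → Set Y}
    (hg : IsCPart Y A ε g) : ∃ g' : Fin (m + 2) → Set Y, IsCPart Y A ε g' := by
  classical
  obtain ⟨hprops, hdisj, hunion⟩ := hg
  obtain ⟨B, C, hB, hC, hBne, hCne, hBC, hBCu⟩ := split_two (hprops 0).1 (hprops 0).2.1
  have hBsub : B ⊆ g 0 := hBCu ▸ Set.subset_union_left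
  have hCsub : C ⊆ g 0 := hBCu ▸ Set.subset_union_right
  have hbd : Bornology.IsBounded (g 0) := (isCompact_univ.isBounded).subset (subset_univ _)
  refine ⟨Fin.cons B (Function.update g 0 C), ⟨?_, ?_, ?_⟩⟩
  · intro j
    refine Fin.cases ?_ (fun i => ?_) j
    · exact ⟨by simpa using hB, by simpa using hBne,
        by simpa using (diam_mono hBsub hbd).trans (hprops 0).2.2⟩
    · simp only [Fin.cons_succ]
      by_cases hi : i = 0
      · subst hi
        simp only [Function.update_self]
        exact ⟨hC, hCne, (diam_mono hCsub hbd).trans (hprops 0).2.2⟩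
      · rw [Function.update_of_ne hi]
        exact hprops i
  · intro i j hij
    have key : ∀ i j : Fin (m + 2), i ≠ j →
        ∀ x, x ∈ (Fin.cons B (Function.update g 0 C) : Fin (m + 2) → Set Y) i →
          x ∈ (Fin.cons B (Function.update g 0 C) : Fin (m + 2) → Set Y) j → i = j := by
      intro i j _ x hxi hxj
      -- derive a contradiction from membership in two distinct pieces
      have mem_piece : ∀ (a : Fin (m + 2)) x,
          x ∈ (Fin.cons B (Function.update g 0 C) : Fin (m + 2) → Set Y) a →
          ∃ (b : Fin (m + 1)), x ∈ g b ∧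
            ((Fin.cons B (Function.update g 0 C) : Fin (m + 2) → Set Y) a ⊆ g b) ∧
            (a = 0 ∨ (∃ i', a = Fin.succ i' ∧ (i' = 0 → b = 0) ∧ (i' ≠ 0 → b = i'))) := by
        intro a x hxa
        rcases Fin.eq_zero_or_eq_succ a with rfl | ⟨i', rfl⟩
        · exact ⟨0, hBsub (by simpa using hxa), by simpa using hBsub, Or.inl rfl⟩
        · by_cases hi' : i' = 0
          · subst hi'
            refine ⟨0, hCsub (by simpa using hxa), ?_, Or.inr ⟨0, rfl, fun _ => rfl, fun h => absurd rfl h⟩⟩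
            simpa using hCsub
          · refine ⟨i', ?_, ?_, Or.inr ⟨i', rfl, fun h => absurd h hi', fun _ => rfl⟩⟩
            · simpa [Function.update_of_ne hi'] using hxa
            · simp only [Fin.cons_succ, Function.update_of_ne hi']
              exact subset_rfl
      obtain ⟨b1, hxb1, hsub1, hcase1⟩ := mem_piece i x hxi
      obtain ⟨b2, hxb2, hsub2, hcase2⟩ := mem_piece j x hxj
      have hb : b1 = b2 := by
        by_contra hne'
        exact Set.disjoint_left.1 (hdisj hne') hxb1 hxb2
      -- now analyze
      rcases hcase1 with h1 | ⟨i', hi', hi'0, hi'n⟩ <;> rcases hcase2 with h2 | ⟨j', hj', hj'0, hj'n⟩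
      · rw [h1, h2]
      · -- i = 0 (so piece B), j = succ j'
        exfalso
        subst h1; subst hj'
        have hxB : x ∈ B := by simpa using hxi
        by_cases hj0 : j' = 0
        · subst hj0
          have hxC : x ∈ C := by simpa using hxj
          exact Set.disjoint_left.1 hBC hxB hxC
        · have hxg : x ∈ g j' := by simpa [Function.update_of_ne hj0] using hxj
          exact Set.disjoint_left.1 (hdisj (Ne.symm hj0) : Disjoint (g 0) (g j')) (hBsub hxB) hxg
      · exfalso
        subst h2; subst hi'
        have hxB : x ∈ B := by simpa using hxj
        by_cases hi0 : i' = 0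
        · subst hi0
          have hxC : x ∈ C := by simpa using hxi
          exact Set.disjoint_left.1 hBC hxB hxC
        · have hxg : x ∈ g i' := by simpa [Function.update_of_ne hi0] using hxi
          exact Set.disjoint_left.1 (hdisj (Ne.symm hi0) : Disjoint (g 0) (g i')) (hBsub hxB) hxg
      · subst hi'; subst hj'
        congr 1
        by_cases hi0 : i' = 0 <;> by_cases hj0 : j' = 0
        · rw [hi0, hj0]
        · exfalso
          subst hi0
          have hxC : x ∈ C := by simpa using hxi
          have hxg : x ∈ g j' := by simpa [Function.update_of_ne hj0] using hxj
          exact Set.disjoint_left.1 (hdisj (Ne.symm hj0) : Disjoint (g 0) (g j')) (hCsub hxC) hxg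
        · exfalso
          subst hj0
          have hxC : x ∈ C := by simpa using hxj
          have hxg : x ∈ g i' := by simpa [Function.update_of_ne hi0] using hxi
          exact Set.disjoint_left.1 (hdisj (Ne.symm hi0) : Disjoint (g 0) (g i')) (hCsub hxC) hxg
        · exact ((hi'n hi0).symm.trans hb).trans (hj'n hj0)
    exact Set.disjoint_left.2 fun x hxi hxj => hij (key i j hij x hxi hxj)
  · ext x
    simp only [mem_iUnion]
    constructor
    · rintro ⟨j, hj⟩
      rcases Fin.eq_zero_or_eq_succ j with rfl | ⟨i, rfl⟩
      · have : x ∈ g 0 := hBsub (by simpa using hj)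
        rw [← hunion]; exact mem_iUnion.2 ⟨0, this⟩
      · rw [← hunion]
        by_cases hi0 : i = 0
        · subst hi0
          have : x ∈ C := by simpa using hj
          exact mem_iUnion.2 ⟨0, hCsub this⟩
        · exact mem_iUnion.2 ⟨i, by simpa [Function.update_of_ne hi0] using hj⟩
    · intro hx
      rw [← hunion] at hx
      obtain ⟨j, hj⟩ := mem_iUnion.1 hx
      by_cases hj0 : j = 0
      · subst hj0
        rw [← hBCu] at hj
        rcases hj with h | h
        · exact ⟨0, by simpa using h⟩
        · exact ⟨Fin.succ 0, by simpa using h⟩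
      · exact ⟨Fin.succ j, by simpa [Function.update_of_ne hj0] using hj⟩

lemma cpart_exists {A : Set Y} (hA : IsClopen A) (hne : A.Nonempty) {ε : ℝ} (hε : 0 < ε) :
    ∃ (m : ℕ) (g : Fin (m + 1) → Set Y), IsCPart Y A ε g := by
  classical
  obtain ⟨n, g, hcl, hdiam, hdisj, hunion⟩ := partition_small hA hε
  set F := {j : Fin n // (g j).Nonempty} with hF
  have hFne : Nonempty F := by
    obtain ⟨x, hx⟩ := hne
    rw [← hunion] at hx
    obtain ⟨j, hj⟩ := mem_iUnion.1 hx
    exact ⟨⟨j, ⟨x, hj⟩⟩⟩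
  have hcard : 0 < Fintype.card F := Fintype.card_pos
  obtain ⟨m, hm⟩ := Nat.exists_eq_succ_of_ne_zero hcard.ne'
  have hm' : Fintype.card F = m + 1 := by omega
  set e : Fin (m + 1) ≃ F := (finCongr hm'.symm).trans (Fintype.equivFin F).symm
  refine ⟨m, fun j => g (e j).1, ⟨?_, ?_, ?_⟩⟩
  · exact fun j => ⟨hcl _, (e j).2, le_trans (hdiam _) (by linarith)⟩
  · intro i j hij
    refine hdisj (fun h => hij (e.injective (Subtype.ext h)))
  · apply Set.Subset.antisymm
    · exact iUnion_subset fun j => (hunion ▸ subset_iUnion g (e j).1)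
    · intro x hx
      rw [← hunion] at hx
      obtain ⟨j, hj⟩ := mem_iUnion.1 hx
      exact mem_iUnion.2 ⟨e.symm ⟨j, ⟨x, hj⟩⟩, by simpa using hj⟩

lemma cpart_exists_card [PerfectSpace Y] {A : Set Y} (hA : IsClopen A) (hne : A.Nonempty)
    {ε : ℝ} (hε : 0 < ε) : ∃ N : ℕ, ∀ d : ℕ, ∃ g : Fin (N + d + 1) → Set Y, IsCPart Y A ε g := by
  obtain ⟨m, g, hg⟩ := cpart_exists hA hne hε
  refine ⟨m, fun d => ?_⟩
  induction d with
  | zero => exact ⟨g, hg⟩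
  | succ d ih =>
      obtain ⟨g', hg'⟩ := ih
      obtain ⟨g'', hg''⟩ := cpart_grow hg'
      exact ⟨g'', hg''⟩

lemma cpart_reindex {A : Set Y} {ε : ℝ} {n n' : ℕ} (σ : Fin n' ≃ Fin n) {g : Fin n → Set Y}
    (hg : IsCPart Y A ε g) : IsCPart Y A ε (g ∘ σ) := by
  obtain ⟨h1, h2, h3⟩ := hg
  refine ⟨fun j => h1 (σ j), fun i j hij => h2 (fun h => hij (σ.injective h)), ?_⟩
  rw [← h3]
  exact Set.Subset.antisymm (iUnion_subset fun j => subset_iUnion g (σ j))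
    (fun x hx => by obtain ⟨j, hj⟩ := mem_iUnion.1 hx;
                    exact mem_iUnion.2 ⟨σ.symm j, by simpa using hj⟩)

section Pair

variable {Z : Type*} [MetricSpace Z] [CompactSpace Z] [TotallyDisconnectedSpace Z]
  [PerfectSpace Y] [PerfectSpace Z]

lemma cpart_pair {A : Set Y} {B : Set Z} (hA : IsClopen A) (hB : IsClopen B)
    (hneA : A.Nonempty) (hneB : B.Nonempty) {ε : ℝ} (hε : 0 < ε) :
    ∃ (m : ℕ) (g : Fin (m + 1) → Set Y) (h : Fin (m + 1) → Set Z),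
      IsCPart Y A ε g ∧ IsCPart Z B ε h := by
  obtain ⟨N₁, hN₁⟩ := cpart_exists_card hA hneA hε
  obtain ⟨N₂, hN₂⟩ := cpart_exists_card hB hneB hε
  obtain ⟨g, hg⟩ := hN₁ N₂
  obtain ⟨h, hh⟩ := hN₂ N₁
  exact ⟨N₁ + N₂, g, h ∘ (finCongr (by omega)),
    hg, cpart_reindex (finCongr (by omega)) hh⟩

end Pair

/-- A stage of the back-and-forth construction: matched partitions of `Y` and `Z`
indexed by a common type, with fibers of diameter at most `ε`. -/
structure CantorStage (Y Z : Type*) [MetricSpace Y] [MetricSpace Z] (ε : ℝ) where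
  F : Type
  q : Y → F
  r : Z → F
  clq : ∀ j, IsClopen (q ⁻¹' {j})
  clr : ∀ j, IsClopen (r ⁻¹' {j})
  neq : ∀ j, Set.Nonempty (q ⁻¹' {j})
  ner : ∀ j, Set.Nonempty (r ⁻¹' {j})
  dq : ∀ j, diam (q ⁻¹' {j}) ≤ ε
  dr : ∀ j, diam (r ⁻¹' {j}) ≤ ε

section Stage

variable {Z : Type*} [MetricSpace Z] [CompactSpace Z] [TotallyDisconnectedSpace Z]
  [PerfectSpace Y] [PerfectSpace Z]

lemma stage_step {ε₀ : ℝ} (s : CantorStage Y Z ε₀) {ε : ℝ} (hε : 0 < ε) :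
    ∃ (t : CantorStage Y Z ε) (π : t.F → s.F),
      (∀ y, π (t.q y) = s.q y) ∧ (∀ z, π (t.r z) = s.r z) := by
  classical
  have key : ∀ j : s.F, ∃ (m : ℕ) (g : Fin (m + 1) → Set Y) (h : Fin (m + 1) → Set Z),
      IsCPart Y (s.q ⁻¹' {j}) ε g ∧ IsCPart Z (s.r ⁻¹' {j}) ε h :=
    fun j => cpart_pair (s.clq j) (s.clr j) (s.neq j) (s.ner j) hε
  choose m g h hg hh using key
  have hqmem : ∀ y : Y, ∃ l : Fin (m (s.q y) + 1), y ∈ g (s.q y) l := fun y =>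
    mem_iUnion.1 ((hg (s.q y)).2.2.symm ▸ (show y ∈ s.q ⁻¹' {s.q y} from rfl))
  have hrmem : ∀ z : Z, ∃ l : Fin (m (s.r z) + 1), z ∈ h (s.r z) l := fun z =>
    mem_iUnion.1 ((hh (s.r z)).2.2.symm ▸ (show z ∈ s.r ⁻¹' {s.r z} from rfl))
  choose qi hqi using hqmem
  choose ri hri using hrmem
  have hqfib : ∀ (j : s.F) (l : Fin (m j + 1)),
      (fun y => (⟨s.q y, qi y⟩ : Σ j : s.F, Fin (m j + 1))) ⁻¹' {⟨j, l⟩} = g j l := by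
    intro j l
    ext y
    simp only [mem_preimage, mem_singleton_iff, Sigma.mk.inj_iff]
    constructor
    · rintro ⟨h1, h2⟩
      subst h1
      have := hqi y
      rwa [eq_of_heq h2] at this
    · intro hy
      have hj : s.q y = j := show y ∈ s.q ⁻¹' {j} from (hg j).2.2 ▸ mem_iUnion.2 ⟨l, hy⟩
      subst hj
      refine ⟨rfl, heq_of_eq ?_⟩
      by_contra hne
      exact Set.disjoint_left.1 ((hg (s.q y)).2.1 hne) (hqi y) hy
  have hrfib : ∀ (j : s.F) (l : Fin (m j + 1)),
      (fun z => (⟨s.r z, ri z⟩ : Σ j : s.F, Fin (m j + 1))) ⁻¹' {⟨j, l⟩} = h j l := by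
    intro j l
    ext z
    simp only [mem_preimage, mem_singleton_iff, Sigma.mk.inj_iff]
    constructor
    · rintro ⟨h1, h2⟩
      subst h1
      have := hri z
      rwa [eq_of_heq h2] at this
    · intro hz
      have hj : s.r z = j := show z ∈ s.r ⁻¹' {j} from (hh j).2.2 ▸ mem_iUnion.2 ⟨l, hz⟩
      subst hj
      refine ⟨rfl, heq_of_eq ?_⟩
      by_contra hne
      exact Set.disjoint_left.1 ((hh (s.r z)).2.1 hne) (hri z) hz
  refine ⟨⟨Σ j : s.F, Fin (m j + 1), fun y => ⟨s.q y, qi y⟩, fun z => ⟨s.r z, ri z⟩,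
    ?_, ?_, ?_, ?_, ?_, ?_⟩, Sigma.fst, fun y => rfl, fun z => rfl⟩ <;> rintro ⟨j, l⟩
  · rw [hqfib j l]; exact ((hg j).1 l).1
  · rw [hrfib j l]; exact ((hh j).1 l).1
  · rw [hqfib j l]; exact ((hg j).1 l).2.1
  · rw [hrfib j l]; exact ((hh j).1 l).2.1
  · rw [hqfib j l]; exact ((hg j).1 l).2.2
  · rw [hrfib j l]; exact ((hh j).1 l).2.2

end Stage

section Main

variable (Y) {Z : Type*} [MetricSpace Z] [CompactSpace Z] [TotallyDisconnectedSpace Z]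
  [PerfectSpace Y] [PerfectSpace Z] [Nonempty Y] [Nonempty Z]

variable (Z) in
noncomputable def cantorB : ℝ := max (diam (univ : Set Y)) (diam (univ : Set Z)) + 1

lemma cantorB_pos : 0 < cantorB Y Z :=
  add_pos_of_nonneg_of_pos (le_max_iff.2 (Or.inl diam_nonneg)) one_pos

variable (Z) in
noncomputable def cantorBase : CantorStage Y Z (cantorB Y Z / ((0 + 1 : ℕ) : ℝ)) where
  F := PUnit
  q := fun _ => PUnit.unit
  r := fun _ => PUnit.unit
  clq := fun j => by
    convert isClopen_univ
    ext y; simp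
  clr := fun j => by
    convert isClopen_univ
    ext z; simp
  neq := fun j => by
    obtain ⟨y⟩ := ‹Nonempty Y›; exact ⟨y, rfl⟩
  ner := fun j => by
    obtain ⟨z⟩ := ‹Nonempty Z›; exact ⟨z, rfl⟩
  dq := fun j => by
    have : (fun _ : Y => PUnit.unit) ⁻¹' {j} ⊆ univ := subset_univ _
    calc diam ((fun _ : Y => PUnit.unit) ⁻¹' {j}) ≤ diam (univ : Set Y) :=
          diam_mono this (isCompact_univ.isBounded)
    _ ≤ cantorB Y Z / ((0 + 1 : ℕ) : ℝ) := by
          simp only [Nat.cast_one, div_one, cantorB, Nat.cast_ofNat, zero_add]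
          have := le_max_left (diam (univ : Set Y)) (diam (univ : Set Z))
          linarith
  dr := fun j => by
    have : (fun _ : Z => PUnit.unit) ⁻¹' {j} ⊆ univ := subset_univ _
    calc diam ((fun _ : Z => PUnit.unit) ⁻¹' {j}) ≤ diam (univ : Set Z) :=
          diam_mono this (isCompact_univ.isBounded)
    _ ≤ cantorB Y Z / ((0 + 1 : ℕ) : ℝ) := by
          simp only [Nat.cast_one, div_one, cantorB, Nat.cast_ofNat, zero_add]
          have := le_max_right (diam (univ : Set Y)) (diam (univ : Set Z))
          linarith

variable (Z) in
noncomputable def stageStep (n : ℕ) (s : CantorStage Y Z (cantorB Y Z / ((n + 1 : ℕ) : ℝ))) :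
    Σ' (t : CantorStage Y Z (cantorB Y Z / ((n + 2 : ℕ) : ℝ))) (π : t.F → s.F),
      (∀ y, π (t.q y) = s.q y) ∧ (∀ z, π (t.r z) = s.r z) := by
  have hε : (0 : ℝ) < cantorB Y Z / ((n + 2 : ℕ) : ℝ) := by
    apply div_pos (cantorB_pos Y)
    positivity
  have h := stage_step s hε
  exact ⟨h.choose, h.choose_spec.choose, h.choose_spec.choose_spec⟩

variable (Z) in
noncomputable def stageSeq : ∀ n : ℕ, CantorStage Y Z (cantorB Y Z / ((n + 1 : ℕ) : ℝ)) :=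
  fun n => Nat.rec (cantorBase Y Z) (fun n s => (stageStep Y Z n s).1) n

variable (Z) in
noncomputable def stageLink (n : ℕ) : (stageSeq Y Z (n + 1)).F → (stageSeq Y Z n).F :=
  (stageStep Y Z n (stageSeq Y Z n)).2.1

lemma stageLink_q (n : ℕ) (y : Y) :
    stageLink Y Z n ((stageSeq Y Z (n + 1)).q y) = (stageSeq Y Z n).q y :=
  (stageStep Y Z n (stageSeq Y Z n)).2.2.1 y

lemma stageLink_r (n : ℕ) (z : Z) :
    stageLink Y Z n ((stageSeq Y Z (n + 1)).r z) = (stageSeq Y Z n).r z :=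
  (stageStep Y Z n (stageSeq Y Z n)).2.2.2 z

end Main

section Main2

variable {Z : Type*} [MetricSpace Z] [CompactSpace Z] [TotallyDisconnectedSpace Z]
  [PerfectSpace Y] [PerfectSpace Z] [Nonempty Y] [Nonempty Z]

lemma stage_tendsto : Filter.Tendsto (fun n : ℕ => cantorB Y Z / ((n + 1 : ℕ) : ℝ))
    Filter.atTop (nhds 0) :=
  (tendsto_const_div_atTop_nhds_zero_nat (cantorB Y Z)).comp (Filter.tendsto_add_atTop_nat 1)

lemma stage_exists_point (y : Y) : ∃ z : Z, ∀ n, (stageSeq Y Z n).r z = (stageSeq Y Z n).q y := by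
  set K : ℕ → Set Z := fun n => (stageSeq Y Z n).r ⁻¹' {(stageSeq Y Z n).q y} with hK
  have hdec : ∀ n, K (n + 1) ⊆ K n := by
    intro n z hz
    have : (stageSeq Y Z (n + 1)).r z = (stageSeq Y Z (n + 1)).q y := hz
    show (stageSeq Y Z n).r z = (stageSeq Y Z n).q y
    rw [← stageLink_r Y n z, this, stageLink_q Y n y]
  have hne : ∀ n, (K n).Nonempty := fun n => (stageSeq Y Z n).ner _
  have hcl : ∀ n, IsClosed (K n) := fun n => ((stageSeq Y Z n).clr _).1
  obtain ⟨z, hz⟩ := IsCompact.nonempty_iInter_of_sequence_nonempty_isCompact_isClosed K hdec hne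
    ((hcl 0).isCompact) hcl
  exact ⟨z, fun n => mem_iInter.1 hz n⟩

lemma stage_exists_point' (z : Z) :
    ∃ y : Y, ∀ n, (stageSeq Y Z n).q y = (stageSeq Y Z n).r z := by
  set K : ℕ → Set Y := fun n => (stageSeq Y Z n).q ⁻¹' {(stageSeq Y Z n).r z} with hK
  have hdec : ∀ n, K (n + 1) ⊆ K n := by
    intro n y hy
    have : (stageSeq Y Z (n + 1)).q y = (stageSeq Y Z (n + 1)).r z := hy
    show (stageSeq Y Z n).q y = (stageSeq Y Z n).r z
    rw [← stageLink_q Y n y, this, stageLink_r Y n z]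
  have hne : ∀ n, (K n).Nonempty := fun n => (stageSeq Y Z n).neq _
  have hcl : ∀ n, IsClosed (K n) := fun n => ((stageSeq Y Z n).clq _).1
  obtain ⟨y, hy⟩ := IsCompact.nonempty_iInter_of_sequence_nonempty_isCompact_isClosed K hdec hne
    ((hcl 0).isCompact) hcl
  exact ⟨y, fun n => mem_iInter.1 hy n⟩

lemma stage_unique_r {z z' : Z} (h : ∀ n, (stageSeq Y Z n).r z = (stageSeq Y Z n).r z') :
    z = z' := by
  have hb : ∀ n, dist z z' ≤ cantorB Y Z / ((n + 1 : ℕ) : ℝ) := by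
    intro n
    have h1 : z ∈ (stageSeq Y Z n).r ⁻¹' {(stageSeq Y Z n).r z'} := h n
    have h2 : z' ∈ (stageSeq Y Z n).r ⁻¹' {(stageSeq Y Z n).r z'} := rfl
    calc dist z z' ≤ diam ((stageSeq Y Z n).r ⁻¹' {(stageSeq Y Z n).r z'}) :=
      dist_le_diam_of_mem (isCompact_univ.isBounded.subset (subset_univ _)) h1 h2
    _ ≤ _ := (stageSeq Y Z n).dr _
  have : dist z z' ≤ 0 := ge_of_tendsto (stage_tendsto (Y := Y) (Z := Z)) (Filter.Eventually.of_forall hb)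
  exact dist_le_zero.1 this

lemma stage_unique_q {y y' : Y} (h : ∀ n, (stageSeq Y Z n).q y = (stageSeq Y Z n).q y') :
    y = y' := by
  have hb : ∀ n, dist y y' ≤ cantorB Y Z / ((n + 1 : ℕ) : ℝ) := by
    intro n
    have h1 : y ∈ (stageSeq Y Z n).q ⁻¹' {(stageSeq Y Z n).q y'} := h n
    have h2 : y' ∈ (stageSeq Y Z n).q ⁻¹' {(stageSeq Y Z n).q y'} := rfl
    calc dist y y' ≤ diam ((stageSeq Y Z n).q ⁻¹' {(stageSeq Y Z n).q y'}) :=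
      dist_le_diam_of_mem (isCompact_univ.isBounded.subset (subset_univ _)) h1 h2
    _ ≤ _ := (stageSeq Y Z n).dq _
  have : dist y y' ≤ 0 := ge_of_tendsto (stage_tendsto (Y := Y) (Z := Z)) (Filter.Eventually.of_forall hb)
  exact dist_le_zero.1 this

theorem cantor_homeo : Nonempty (Y ≃ₜ Z) := by
  classical
  choose Φ hΦ using stage_exists_point (Y := Y) (Z := Z)
  have hinj : Function.Injective Φ := by
    intro y y' h
    refine stage_unique_q (Z := Z) fun n => ?_
    rw [← hΦ y n, h, hΦ y' n]
  have hsurj : Function.Surjective Φ := by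
    intro z
    obtain ⟨y, hy⟩ := stage_exists_point' (Y := Y) z
    refine ⟨y, stage_unique_r (Y := Y) fun n => ?_⟩
    rw [hΦ y n, hy n]
  have hcont : Continuous Φ := by
    rw [continuous_iff_continuousAt]
    intro y
    refine Metric.tendsto_nhds.2 fun ε hε => ?_
    obtain ⟨n, hn⟩ :=
      ((stage_tendsto (Y := Y) (Z := Z)).eventually (gt_mem_nhds hε)).exists
    have hU : (stageSeq Y Z n).q ⁻¹' {(stageSeq Y Z n).q y} ∈ nhds y :=
      ((stageSeq Y Z n).clq _).2.mem_nhds rfl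
    refine Filter.eventually_of_mem hU fun y' hy' => ?_
    have h1 : (stageSeq Y Z n).r (Φ y') = (stageSeq Y Z n).q y := by
      rw [hΦ y' n]; exact hy'
    have h2 : (stageSeq Y Z n).r (Φ y) = (stageSeq Y Z n).q y := hΦ y n
    calc dist (Φ y') (Φ y)
        ≤ diam ((stageSeq Y Z n).r ⁻¹' {(stageSeq Y Z n).q y}) :=
          dist_le_diam_of_mem (isCompact_univ.isBounded.subset (subset_univ _)) h1 h2
    _ ≤ cantorB Y Z / ((n + 1 : ℕ) : ℝ) := (stageSeq Y Z n).dr _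
    _ < ε := hn
  exact ⟨Continuous.homeoOfEquivCompactToT2 (f := Equiv.ofBijective Φ ⟨hinj, hsurj⟩) hcont⟩

end Main2

end CantorAux

section ShiftAux
open Set

variable {E : V → V → Prop}

lemma shiftMap_iterate (n : ℕ) (t : vertexShift E) (i : ℤ) :
    ((shiftMap E)^[n] t).1 i = t.1 (i + n) := by
  induction n generalizing t i with
  | zero => simp
  | succ n ih =>
      rw [Function.iterate_succ_apply, ih (shiftMap E t) i]
      show t.1 (i + n + 1) = t.1 (i + (n + 1 : ℕ))
      congr 1
      push_cast
      ring

lemma exists_through (hsucc : ∀ i, ∃ j, E i j) (hpred : ∀ j, ∃ i, E i j) (v : V) :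
    ∃ t : ℤ → V, t ∈ vertexShift E ∧ t 0 = v := by
  classical
  choose succ hsucc' using hsucc
  choose pred hpred' using hpred
  refine ⟨fun i => if i ≤ 0 then pred^[(-i).toNat] v else succ^[i.toNat] v, ?_, by simp⟩
  intro i
  simp only
  by_cases h1 : i + 1 ≤ 0
  · have h0 : i ≤ 0 := by omega
    rw [if_pos h0, if_pos h1]
    have hk : (-i).toNat = (-(i + 1)).toNat + 1 := by omega
    rw [hk, Function.iterate_succ_apply']
    exact hpred' _
  · by_cases h0 : i ≤ 0
    · have : i = 0 := by omega
      subst this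
      rw [if_pos le_rfl, if_neg h1]
      norm_num
      exact hsucc' v
    · rw [if_neg h0, if_neg h1]
      have hk : (i + 1).toNat = i.toNat + 1 := by omega
      rw [hk, Function.iterate_succ_apply']
      exact hsucc' _

lemma exists_glue {a b : ℤ → V} (ha : a ∈ vertexShift E) (hb : b ∈ vertexShift E)
    (m : ℤ) (n : ℕ) (hn : 1 ≤ n) (p : ℕ → V) (hp0 : p 0 = a m) (hpn : p n = b (m + n))
    (hpe : ∀ r < n, E (p r) (p (r + 1))) :
    ∃ s : ℤ → V, s ∈ vertexShift E ∧ (∀ i ≤ m, s i = a i) ∧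
      (∀ i, m ≤ i → i ≤ m + n → s i = p (i - m).toNat) ∧ (∀ i, m + n ≤ i → s i = b i) := by
  classical
  set s : ℤ → V := fun i => if i ≤ m then a i else if i ≤ m + n then p (i - m).toNat else b i
    with hs
  have hsa : ∀ i ≤ m, s i = a i := fun i hi => if_pos hi
  have hsp : ∀ i, m ≤ i → i ≤ m + n → s i = p (i - m).toNat := by
    intro i him hin
    by_cases h : i ≤ m
    · have : i = m := le_antisymm h him
      subst this
      rw [hsa i le_rfl]
      simp [hp0]
    · rw [hs]
      simp only [if_neg h, if_pos hin]
  have hsb : ∀ i, m + n ≤ i → s i = b i := by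
    intro i hi
    by_cases h2 : i ≤ m + n
    · have : i = m + n := le_antisymm h2 hi
      subst this
      rw [hsp _ (by omega) le_rfl]
      have h4 : ((m + (n : ℤ) - m).toNat) = n := by omega
      rw [h4, hpn]
    · have h : ¬ i ≤ m := by omega
      rw [hs]; simp only [if_neg h, if_neg h2]
  refine ⟨s, ?_, hsa, hsp, hsb⟩
  intro i
  by_cases h1 : i + 1 ≤ m
  · rw [hsa i (by omega), hsa (i + 1) h1]
    exact ha i
  · by_cases h2 : i + 1 ≤ m + n
    · -- p-region: m ≤ i, i + 1 ≤ m + n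
      have him : m ≤ i := by omega
      rw [hsp i him (by omega), hsp (i + 1) (by omega) h2]
      have hr : (i + 1 - m).toNat = (i - m).toNat + 1 := by omega
      rw [hr]
      exact hpe _ (by omega)
    · by_cases h3 : i ≤ m + n
      · -- boundary: s i = p region endpoint or b, s (i+1) = b (i+1)
        have : i = m + n := by omega
        subst this
        rw [hsp _ (by omega) le_rfl, hsb _ (by omega)]
        have : ((m + n - m).toNat) = n := by omega
        rw [this, hpn]
        exact hb (m + n)
      · rw [hsb i (by omega), hsb (i + 1) (by omega)]
        exact hb i

lemma shift_mem {t : ℤ → V} (ht : t ∈ vertexShift E) (c : ℤ) :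
    (fun i => t (i - c)) ∈ vertexShift E := by
  intro i
  have := ht (i - c)
  simpa [show i - c + 1 = i + 1 - c by ring] using this

section Topo

variable [TopologicalSpace V] [DiscreteTopology V]

lemma isClosed_vertexShift : IsClosed (vertexShift E) := by
  have : vertexShift E = ⋂ i : ℤ, (fun t : ℤ → V => (t i, t (i + 1))) ⁻¹' {p : V × V | E p.1 p.2} := by
    ext t
    simp only [vertexShift, mem_setOf_eq, mem_iInter, mem_preimage]
  rw [this]
  exact isClosed_iInter fun i =>
    (isClosed_discrete _).preimage ((continuous_apply i).prodMk (continuous_apply (i + 1)))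

lemma exists_cylinder {A : Set ↥(vertexShift E)} (hA : IsOpen A) {t : ↥(vertexShift E)}
    (ht : t ∈ A) :
    ∃ M : ℕ, ∀ s : ↥(vertexShift E), (∀ i : ℤ, i.natAbs ≤ M → s.1 i = t.1 i) → s ∈ A := by
  obtain ⟨U, hU, hUA⟩ := isOpen_induced_iff.1 hA
  have htU : t.1 ∈ U := by rw [← hUA] at ht; exact ht
  obtain ⟨I, u, hu, hsub⟩ := isOpen_pi_iff.1 hU t.1 htU
  refine ⟨I.sup Int.natAbs, fun s hs => ?_⟩
  have hmem : s.1 ∈ (I : Set ℤ).pi u := by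
    intro i hi
    rw [hs i (Finset.le_sup hi)]
    exact (hu i hi).2
  rw [← hUA]
  exact hsub hmem

end Topo

lemma perfectSpace_open_subtype {α : Type*} [TopologicalSpace α] [PerfectSpace α]
    {U : Set α} (hU : IsOpen U) : PerfectSpace ↥U := by
  rw [perfectSpace_iff_forall_not_isolated]
  rintro ⟨x, hx⟩
  rw [← mem_closure_iff_nhdsWithin_neBot, closure_subtype]
  have himg : (Subtype.val '' ({(⟨x, hx⟩ : ↥U)}ᶜ) : Set α) = U \ {x} := by
    ext y
    simp only [mem_image, mem_compl_iff, mem_singleton_iff, mem_diff]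
    constructor
    · rintro ⟨⟨y', hy'⟩, hne, rfl⟩
      exact ⟨hy', fun h => hne (Subtype.ext (h ▸ rfl))⟩
    · rintro ⟨hyU, hyx⟩
      exact ⟨⟨y, hyU⟩, fun h => hyx (by simpa using congrArg Subtype.val h), rfl⟩
  rw [himg]
  have hx' : x ∈ closure ({x}ᶜ : Set α) :=
    mem_closure_iff_nhdsWithin_neBot.2 (PerfectSpace.not_isolated x)
  rw [mem_closure_iff] at hx' ⊢
  intro o ho hxo
  obtain ⟨y, hy⟩ := hx' (o ∩ U) (ho.inter hU) ⟨hxo, hx⟩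
  exact ⟨y, hy.1.1, hy.1.2, hy.2⟩

end ShiftAux

/-- For a chain mixing continuous surjection `f` of a Cantor space and nontrivial
finite clopen partitions `𝒲_k` with mesh tending to `0`, each vertex shift
`Σ(f,𝒲_k)` is a topologically mixing SFT homeomorphic to the Cantor set, and
there are homeomorphisms `ψ_k : Σ(f,𝒲_k) → X` with `ψ_k ∘ σ ∘ ψ_k⁻¹ → f` uniformly. -/
theorem stmt_13 {X : Type*} [MetricSpace X] [CompactSpace X] [PerfectSpace X]
    [TotallyDisconnectedSpace X] [Nonempty X]
    (f : X → X) (hf : Continuous f) (hsurj : Function.Surjective f)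
    (hcm : ChainMixing f)
    {ι : ℕ → Type*} [∀ k, Fintype (ι k)]
    [∀ k, TopologicalSpace (ι k)] [∀ k, DiscreteTopology (ι k)]
    (W : ∀ k, ι k → Set X)
    (hne : ∀ k i, (W k i).Nonempty) (hclopen : ∀ k i, IsClopen (W k i))
    (hdisj : ∀ k, ∀ i j, i ≠ j → Disjoint (W k i) (W k j))
    (hcover : ∀ k, ∀ x : X, ∃ i, x ∈ W k i)
    (hnontriv : ∀ k, ∃ i j : ι k, i ≠ j)
    (hmesh : ∀ ε : ℝ, 0 < ε → ∃ K : ℕ, ∀ k ≥ K, ∀ i, Metric.diam (W k i) < ε) :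
    (∀ k, ∀ A B : Set (vertexShift (fun i j : ι k => (f '' W k i ∩ W k j).Nonempty)),
        IsOpen A → IsOpen B → A.Nonempty → B.Nonempty →
        ∃ N : ℕ, ∀ n ≥ N,
          ((shiftMap (fun i j : ι k => (f '' W k i ∩ W k j).Nonempty))^[n] '' A ∩ B).Nonempty) ∧
    (∀ k, Nonempty (vertexShift (fun i j : ι k => (f '' W k i ∩ W k j).Nonempty)) ∧
        CompactSpace (vertexShift (fun i j : ι k => (f '' W k i ∩ W k j).Nonempty)) ∧
        TopologicalSpace.MetrizableSpace
          (vertexShift (fun i j : ι k => (f '' W k i ∩ W k j).Nonempty)) ∧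
        TotallyDisconnectedSpace
          (vertexShift (fun i j : ι k => (f '' W k i ∩ W k j).Nonempty)) ∧
        PerfectSpace (vertexShift (fun i j : ι k => (f '' W k i ∩ W k j).Nonempty))) ∧
    ∃ ψ : ∀ k, vertexShift (fun i j : ι k => (f '' W k i ∩ W k j).Nonempty) ≃ₜ X,
      TendstoUniformly
        (fun k x => ψ k (shiftMap (fun i j : ι k => (f '' W k i ∩ W k j).Nonempty)
          ((ψ k).symm x))) f atTop := by
  classical
  set E : ∀ k, ι k → ι k → Prop := fun k i j => (f '' W k i ∩ W k j).Nonempty with hE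
  choose cell hcellmem using hcover
  have cell_eq : ∀ k x i, x ∈ W k i → cell k x = i := by
    intro k x i hi
    by_contra h
    exact Set.disjoint_left.1 (hdisj k _ _ h) (hcellmem k x) hi
  have hEsucc : ∀ k i, ∃ j, E k i j := by
    intro k i
    obtain ⟨x, hx⟩ := hne k i
    exact ⟨cell k (f x), ⟨f x, ⟨x, hx, rfl⟩, hcellmem k (f x)⟩⟩
  have hEpred : ∀ k j, ∃ i, E k i j := by
    intro k j
    obtain ⟨z, hz⟩ := hne k j
    obtain ⟨y, rfl⟩ := hsurj z
    exact ⟨cell k y, ⟨f y, ⟨y, hcellmem k y, rfl⟩, hz⟩⟩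
  have hgmix : ∀ k (i j : ι k), ∃ N, ∀ n ≥ N, ∃ p : ℕ → ι k,
      p 0 = i ∧ p n = j ∧ ∀ m < n, E k (p m) (p (m + 1)) := by
    intro k i j
    obtain ⟨δ, hδpos, hδ⟩ := lebesgue_number_lemma_of_metric isCompact_univ
      (fun i => (hclopen k i).2) (fun x _ => Set.mem_iUnion.2 ⟨cell k x, hcellmem k x⟩)
    obtain ⟨x, hx⟩ := hne k i
    obtain ⟨y, hy⟩ := hne k j
    obtain ⟨N, hN⟩ := hcm δ hδpos x y
    refine ⟨N, fun n hn => ?_⟩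
    obtain ⟨c, hc0, hcn, hcd⟩ := hN n hn
    refine ⟨fun m => cell k (c m), by simp only [hc0]; exact cell_eq k x i hx,
      by simp only [hcn]; exact cell_eq k y j hy, ?_⟩
    intro m hm
    obtain ⟨b, hb⟩ := hδ (c (m + 1)) (Set.mem_univ _)
    have h1 : f (c m) ∈ W k b := hb (by rw [Metric.mem_ball]; exact hcd m hm)
    have h2 : c (m + 1) ∈ W k b := hb (Metric.mem_ball_self hδpos)
    have hb2 : cell k (c (m + 1)) = b := cell_eq k _ _ h2
    refine ⟨f (c m), ⟨c m, hcellmem k (c m), rfl⟩, ?_⟩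
    show f (c m) ∈ W k (cell k (c (m + 1)))
    rw [hb2]
    exact h1
  -- Part A: topological mixing
  have partA : ∀ k, ∀ A B : Set (vertexShift (E k)),
      IsOpen A → IsOpen B → A.Nonempty → B.Nonempty →
      ∃ N : ℕ, ∀ n ≥ N, ((shiftMap (E k))^[n] '' A ∩ B).Nonempty := by
    intro k A B hAo hBo hAne hBne
    obtain ⟨a, ha⟩ := hAne
    obtain ⟨b, hb⟩ := hBne
    obtain ⟨MA, hMA⟩ := exists_cylinder hAo ha
    obtain ⟨MB, hMB⟩ := exists_cylinder hBo hb
    set M : ℕ := max MA MB with hM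
    obtain ⟨N₀, hN₀⟩ := hgmix k (a.1 (M : ℤ)) (b.1 (-(M : ℤ)))
    refine ⟨N₀ + 2 * M + 1, fun n hn => ?_⟩
    obtain ⟨p, hp0, hpm, hpe⟩ := hN₀ (n - 2 * M) (by omega)
    have hb' : (fun i : ℤ => b.1 (i - n)) ∈ vertexShift (E k) := shift_mem b.2 n
    have hcast : ((M : ℤ) + (n - 2 * M : ℕ)) - n = -(M : ℤ) := by push_cast; omega
    have hpn' : p (n - 2 * M) = (fun i : ℤ => b.1 (i - n)) ((M : ℤ) + (n - 2 * M : ℕ)) := by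
      simp only
      rw [hcast, hpm]
    obtain ⟨s, hsmem, hs1, hs2, hs3⟩ := exists_glue a.2 hb' (M : ℤ) (n - 2 * M)
      (by omega) p hp0 hpn' hpe
    have hsA : (⟨s, hsmem⟩ : vertexShift (E k)) ∈ A :=
      hMA _ (fun i hi => hs1 i (by omega))
    refine ⟨(shiftMap (E k))^[n] ⟨s, hsmem⟩, ⟨⟨s, hsmem⟩, hsA, rfl⟩, ?_⟩
    refine hMB _ (fun i hi => ?_)
    rw [shiftMap_iterate]
    have h3 := hs3 (i + n) (by push_cast; omega)
    simpa using h3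
  -- Part B: the space is a nonempty Cantor space
  have hNE : ∀ k, Nonempty (vertexShift (E k)) := by
    intro k
    obtain ⟨t, ht, _⟩ := exists_through (hEsucc k) (hEpred k) (hnontriv k).choose
    exact ⟨⟨t, ht⟩⟩
  have hCS : ∀ k, CompactSpace (vertexShift (E k)) := fun k =>
    isCompact_iff_compactSpace.1 (isClosed_vertexShift.isCompact)
  have hPF : ∀ k, PerfectSpace (vertexShift (E k)) := by
    intro k
    rw [perfectSpace_iff_forall_not_isolated]
    intro t
    rw [← mem_closure_iff_nhdsWithin_neBot, mem_closure_iff]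
    intro o ho hto
    obtain ⟨M, hM⟩ := exists_cylinder ho hto
    obtain ⟨u, v, huv⟩ := hnontriv k
    obtain ⟨Nu, hNu⟩ := hgmix k (t.1 (M : ℤ)) u
    obtain ⟨Nv, hNv⟩ := hgmix k (t.1 (M : ℤ)) v
    set n : ℕ := max Nu Nv + 1 with hn
    have hpath : ∃ p : ℕ → ι k, p 0 = t.1 (M : ℤ) ∧ (∀ m < n, E k (p m) (p (m + 1))) ∧
        p n ≠ t.1 ((M : ℤ) + n) := by
      obtain ⟨pu, hpu0, hpun, hpue⟩ := hNu n (by omega)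
      obtain ⟨pv, hpv0, hpvn, hpve⟩ := hNv n (by omega)
      by_cases hcase : u = t.1 ((M : ℤ) + n)
      · refine ⟨pv, hpv0, hpve, ?_⟩
        rw [hpvn, ← hcase]
        exact fun h => huv h.symm
      · refine ⟨pu, hpu0, hpue, ?_⟩
        rw [hpun]
        exact hcase
    obtain ⟨p, hp0, hpe, hpend⟩ := hpath
    obtain ⟨t0, ht0, ht00⟩ := exists_through (hEsucc k) (hEpred k) (p n)
    have hbmem : (fun i : ℤ => t0 (i - ((M : ℤ) + n))) ∈ vertexShift (E k) := shift_mem ht0 _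
    have hpn' : p n = (fun i : ℤ => t0 (i - ((M : ℤ) + n))) ((M : ℤ) + n) := by
      simp [ht00]
    obtain ⟨s, hsmem, hs1, hs2, hs3⟩ := exists_glue t.2 hbmem (M : ℤ) n (by omega) p hp0 hpn' hpe
    refine ⟨⟨s, hsmem⟩, ⟨hM ⟨s, hsmem⟩ (fun i hi => hs1 i (by omega)), ?_⟩⟩
    intro hc
    have hst : s = t.1 := congrArg Subtype.val hc
    have h2 := hs2 ((M : ℤ) + n) (by omega) le_rfl
    have h3 : ((M : ℤ) + n - M).toNat = n := by omega
    rw [h3] at h2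
    exact hpend (by rw [← h2, hst])
  have partB : ∀ k, Nonempty (vertexShift (E k)) ∧ CompactSpace (vertexShift (E k)) ∧
      TopologicalSpace.MetrizableSpace (vertexShift (E k)) ∧
      TotallyDisconnectedSpace (vertexShift (E k)) ∧ PerfectSpace (vertexShift (E k)) :=
    fun k => ⟨hNE k, hCS k, inferInstance, inferInstance, hPF k⟩
  -- Part C: the conjugating homeomorphisms
  have key : ∀ k, ∃ ψ : vertexShift (E k) ≃ₜ X, ∀ t : vertexShift (E k), ψ t ∈ W k (t.1 0) := by
    intro k
    haveI := hCS k
    haveI := hPF k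
    haveI := hNE k
    set Cyl : ι k → Set (vertexShift (E k)) := fun i => {t | t.1 0 = i} with hCyl
    have hCylclopen : ∀ i, IsClopen (Cyl i) :=
      fun i => IsClopen.preimage (isClopen_discrete {i})
        ((continuous_apply (0 : ℤ)).comp continuous_subtype_val)
    have hCylne : ∀ i, (Cyl i).Nonempty := by
      intro i
      obtain ⟨t, ht, ht0⟩ := exists_through (hEsucc k) (hEpred k) i
      exact ⟨⟨t, ht⟩, ht0⟩
    have he : ∀ i, Nonempty (↥(Cyl i) ≃ₜ ↥(W k i)) := by
      intro i
      letI : MetricSpace ↥(Cyl i) := TopologicalSpace.metrizableSpaceMetric _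
      haveI : CompactSpace ↥(Cyl i) := isCompact_iff_compactSpace.1 (hCylclopen i).1.isCompact
      haveI : PerfectSpace ↥(Cyl i) := perfectSpace_open_subtype (hCylclopen i).2
      haveI : Nonempty ↥(Cyl i) := (hCylne i).to_subtype
      haveI : CompactSpace ↥(W k i) := isCompact_iff_compactSpace.1 (hclopen k i).1.isCompact
      haveI : PerfectSpace ↥(W k i) := perfectSpace_open_subtype (hclopen k i).2
      haveI : Nonempty ↥(W k i) := (hne k i).to_subtype
      exact cantor_homeo
    let e : ∀ i, ↥(Cyl i) ≃ₜ ↥(W k i) := fun i => (he i).some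
    let ψf : vertexShift (E k) → X := fun t => (e (t.1 0) ⟨t, rfl⟩ : ↥(W k (t.1 0))).1
    have hcast : ∀ (t : vertexShift (E k)) (i : ι k) (h : t.1 0 = i),
        ψf t = (e i ⟨t, h⟩ : ↥(W k i)).1 := by
      intro t i h
      subst h
      rfl
    have hmemW : ∀ t, ψf t ∈ W k (t.1 0) := fun t => (e (t.1 0) ⟨t, rfl⟩).2
    have hinj : Function.Injective ψf := by
      intro t t' h
      have hii : t'.1 0 = t.1 0 := by
        by_contra hne'
        refine Set.disjoint_left.1 (hdisj k _ _ hne') (hmemW t') ?_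
        rw [← h]
        exact hmemW t
      rw [hcast t (t.1 0) rfl, hcast t' (t.1 0) hii] at h
      have h2 := (e (t.1 0)).injective (Subtype.ext h)
      exact congrArg Subtype.val h2
    have hsurjf : Function.Surjective ψf := by
      intro x
      refine ⟨((e (cell k x)).symm ⟨x, hcellmem k x⟩).1, ?_⟩
      rw [hcast _ (cell k x) ((e (cell k x)).symm ⟨x, hcellmem k x⟩).2]
      show ((e (cell k x)) ((e (cell k x)).symm ⟨x, hcellmem k x⟩) : ↥(W k (cell k x))).1 = x
      rw [Homeomorph.apply_symm_apply]
    have hcont : Continuous ψf := by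
      rw [continuous_iff_continuousAt]
      intro t
      have hCo : ContinuousOn ψf (Cyl (t.1 0)) := by
        rw [continuousOn_iff_continuous_restrict]
        have hres : Set.restrict (Cyl (t.1 0)) ψf =
            fun u : ↥(Cyl (t.1 0)) => (e (t.1 0) u : ↥(W k (t.1 0))).1 := by
          funext u
          exact hcast u.1 (t.1 0) u.2
        change Continuous (Set.restrict (Cyl (t.1 0)) ψf)
        rw [hres]
        exact continuous_subtype_val.comp (e (t.1 0)).continuous
      exact hCo.continuousAt ((hCylclopen (t.1 0)).2.mem_nhds rfl)
    exact ⟨Continuous.homeoOfEquivCompactToT2 (f := Equiv.ofBijective ψf ⟨hinj, hsurjf⟩) hcont,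
      hmemW⟩
  choose Ψ hΨ using key
  refine ⟨partA, partB, Ψ, ?_⟩
  rw [Metric.tendstoUniformly_iff]
  intro ε hε
  have hfu := CompactSpace.uniformContinuous_of_continuous hf
  obtain ⟨δ, hδpos, hδ⟩ := Metric.uniformContinuous_iff.1 hfu (ε / 2) (by linarith)
  obtain ⟨K, hK⟩ := hmesh (min δ (ε / 2)) (by positivity)
  rw [eventually_atTop]
  refine ⟨K, fun k hk x => ?_⟩
  set t : vertexShift (E k) := (Ψ k).symm x with hts
  have hx : x ∈ W k (t.1 0) := by
    have := hΨ k t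
    rwa [hts, Homeomorph.apply_symm_apply] at this
  have hgx : Ψ k (shiftMap (E k) t) ∈ W k (t.1 (0 + 1)) := hΨ k (shiftMap (E k) t)
  have hEt : E k (t.1 0) (t.1 (0 + 1)) := t.2 0
  obtain ⟨z, hzi, hzj⟩ := hEt
  obtain ⟨x', hx', hfx'⟩ := hzi
  have hbound1 : dist x x' ≤ Metric.diam (W k (t.1 0)) :=
    Metric.dist_le_diam_of_mem ((hclopen k _).1.isCompact.isBounded) hx hx'
  have hd1 : dist (f x) (f x') < ε / 2 :=
    hδ (lt_of_le_of_lt hbound1 (lt_of_lt_of_le (hK k hk _) (min_le_left _ _)))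
  have hfz : f x' ∈ W k (t.1 (0 + 1)) := by rw [hfx']; exact hzj
  have hd2 : dist (f x') (Ψ k (shiftMap (E k) t)) ≤ Metric.diam (W k (t.1 (0 + 1))) :=
    Metric.dist_le_diam_of_mem ((hclopen k _).1.isCompact.isBounded) hfz hgx
  have hd2' : dist (f x') (Ψ k (shiftMap (E k) t)) < ε / 2 :=
    lt_of_le_of_lt hd2 (lt_of_lt_of_le (hK k hk _) (min_le_right _ _))
  calc dist (f x) (Ψ k (shiftMap (E k) ((Ψ k).symm x)))
      = dist (f x) (Ψ k (shiftMap (E k) t)) := by rw [← hts]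
    _ ≤ dist (f x) (f x') + dist (f x') (Ψ k (shiftMap (E k) t)) := dist_triangle _ _ _
    _ < ε / 2 + ε / 2 := add_lt_add hd1 hd2'
    _ = ε := by ring
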